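/- Let ζ : [0,∞) → ℂ be bounded and continuous, and let f : [0,∞) → ℂ be continuous with ∫₀^∞ e^{−νt} |f(t)| dt < ∞ for every ν > 1. Then there exists ν > 1 such that the unique continuous solution q of the Volterra equation q(t) + ∫₀^t 𝓘(t−τ) ζ(τ) q(τ) dτ = f(t) satisfies ∫₀^∞ e^{−νt} |q(t)| dt < ∞. -/

import Mathlib

open MeasureTheory

/-- The Volterra function of order `-1`: `𝓘(t) = ∫₀^∞ t^(s-1)/Γ(s) ds`. -/
noncomputable def volterraI (t : ℝ) : ℝ :=
  ∫ s in Set.Ioi (0 : ℝ), t ^ (s - 1) / Real.Gamma s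

/-!
By Tonelli and `∫₀^∞ e^{-νs} s^{r-1} / Γ(r) ds = ν^{-r}`, the Laplace transform of `𝓘` is at most
`∫₀^∞ ν^{-r} dr = 1 / log ν`. Weighting the equation by `e^{-νt}` turns it into `g ≤ F + k ⋆ g`
with `g = e^{-νt} |q|`, `F = e^{-νt} |f|` and `k(s) = M e^{-νs} 𝓘(s)`, where `M` bounds `ζ`.
For `log ν = 2 (M + 1)` the kernel has mass at most `1/2`, so Young's inequality gives
`∫₀^T g ≤ ∫₀^T F + ½ ∫₀^T g`; as `q` is continuous, `∫₀^T g` is finite, hence `∫₀^T g ≤ 2 ∫₀^∞ F`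
for every `T`.
-/

open Set Real ENNReal

@[fun_prop]
theorem Real.measurable_Gamma : Measurable Gamma := by
  have hpoles : (range fun n : ℕ => -(n : ℝ)).Countable := countable_range _
  have : Countable (range fun n : ℕ => -(n : ℝ)) := hpoles.to_subtype
  refine measurable_of_restrict_of_restrict_compl hpoles.measurableSet
    (measurable_of_countable _) ?_
  refine (continuousOn_iff_continuous_domRestrict.1 fun s hs => ?_).measurable
  exact (differentiableAt_Gamma fun m hm => hs ⟨m, hm.symm⟩).continuousAt.continuousWithinAt

@[fun_prop]
theorem measurable_volterraI : Measurable volterraI := by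
  have : Measurable fun p : ℝ × ℝ => p.1 ^ (p.2 - 1) / Gamma p.2 := by fun_prop
  exact this.stronglyMeasurable.integral_prod_right'.measurable

theorem volterraI_nonneg {t : ℝ} (ht : 0 ≤ t) : 0 ≤ volterraI t :=
  setIntegral_nonneg measurableSet_Ioi fun _ hs =>
    div_nonneg (rpow_nonneg ht _) (Gamma_nonneg_of_nonneg (le_of_lt hs))

theorem ENNReal.ofReal_integral_le_lintegral_ofReal {α : Type*} [MeasurableSpace α]
    (μ : Measure α) (f : α → ℝ) :
    ENNReal.ofReal (∫ x, f x ∂μ) ≤ ∫⁻ x, ENNReal.ofReal (f x) ∂μ := by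
  by_cases hf : Integrable f μ
  · calc ENNReal.ofReal (∫ x, f x ∂μ) ≤ ENNReal.ofReal (∫ x, max (f x) 0 ∂μ) :=
          ofReal_le_ofReal (integral_mono hf hf.pos_part fun x => le_max_left _ _)
      _ = ∫⁻ x, ENNReal.ofReal (max (f x) 0) ∂μ :=
          ofReal_integral_eq_lintegral_ofReal hf.pos_part (ae_of_all _ fun x => le_max_right _ _)
      _ = ∫⁻ x, ENNReal.ofReal (f x) ∂μ := by simp_rw [ENNReal.ofReal_max, ofReal_zero, max_zero]
  · simp [integral_undef hf]

theorem lintegral_exp_neg_mul_rpow_div_Gamma {ν r : ℝ} (hν : 0 < ν) (hr : 0 < r) :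
    ∫⁻ s in Ioi 0, ENNReal.ofReal (exp (-ν * s) * (s ^ (r - 1) / Gamma r)) =
      ENNReal.ofReal (exp (-log ν * r)) := by
  have hint : ∫ s in Ioi 0, exp (-ν * s) * (s ^ (r - 1) / Gamma r) = exp (-log ν * r) := by
    simp_rw [mul_div_assoc', mul_comm (exp _), integral_div, neg_mul ν,
      integral_rpow_mul_exp_neg_mul_Ioi hr hν, mul_div_cancel_right₀ _ (Gamma_pos_of_pos hr).ne',
      rpow_def_of_pos (one_div_pos.2 hν), one_div, Real.log_inv]
  rw [← hint, ofReal_integral_eq_lintegral_ofReal]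
  · exact .of_integral_ne_zero (hint ▸ (exp_pos _).ne')
  · filter_upwards [self_mem_ae_restrict measurableSet_Ioi] with s (hs : 0 < s)
    have := Gamma_pos_of_pos hr
    positivity

theorem lintegral_exp_neg_mul_Ioi {c : ℝ} (hc : 0 < c) :
    ∫⁻ r in Ioi 0, ENNReal.ofReal (exp (-c * r)) = ENNReal.ofReal c⁻¹ := by
  rw [← ofReal_integral_eq_lintegral_ofReal (exp_neg_integrableOn_Ioi 0 hc)
    (ae_of_all _ fun _ => (exp_pos _).le), integral_exp_mul_Ioi (neg_lt_zero.2 hc)]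
  simp

theorem lintegral_exp_neg_mul_volterraI_le {ν : ℝ} (hν : 1 < ν) :
    ∫⁻ s in Ioi 0, ENNReal.ofReal (exp (-ν * s) * volterraI s) ≤ ENNReal.ofReal (log ν)⁻¹ := calc
  _ ≤ ∫⁻ s in Ioi 0, ∫⁻ r in Ioi 0, ENNReal.ofReal (exp (-ν * s) * (s ^ (r - 1) / Gamma r)) :=
      lintegral_mono fun s => by
        rw [volterraI, ← integral_const_mul]
        exact ENNReal.ofReal_integral_le_lintegral_ofReal _ _
  _ = ∫⁻ r in Ioi 0, ∫⁻ s in Ioi 0, ENNReal.ofReal (exp (-ν * s) * (s ^ (r - 1) / Gamma r)) :=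
      lintegral_lintegral_swap (by fun_prop)
  _ = ∫⁻ r in Ioi 0, ENNReal.ofReal (exp (-log ν * r)) :=
      setLIntegral_congr_fun measurableSet_Ioi fun _ hr =>
        lintegral_exp_neg_mul_rpow_div_Gamma (by linarith) hr
  _ = _ := lintegral_exp_neg_mul_Ioi (log_pos hν)

theorem ENNReal.le_two_mul_of_le_add_inv_two_mul {x a : ℝ≥0∞} (hx : x ≠ ∞)
    (h : x ≤ a + 2⁻¹ * x) : x ≤ 2 * a := by
  have hhalf : 2⁻¹ * x + 2⁻¹ * x = x := by rw [← add_mul, ENNReal.inv_two_add_inv_two, one_mul]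
  have : 2⁻¹ * x ≤ a :=
    ENNReal.le_of_add_le_add_right (mul_ne_top (inv_ne_top.2 two_ne_zero) hx) (hhalf.le.trans h)
  calc x = 2 * (2⁻¹ * x) := by
        rw [← mul_assoc, ENNReal.mul_inv_cancel two_ne_zero ofNat_ne_top, one_mul]
    _ ≤ 2 * a := by gcongr

section VolterraConvolution

variable {k g F : ℝ → ℝ≥0∞}

theorem setLIntegral_Ioc_sub_mul_eq_indicator {a b t : ℝ} (ht : t ≤ b) :
    ∫⁻ τ in Ioc a t, k (t - τ) * g τ = ∫⁻ τ in Ioc a b, (Ici 0).indicator k (t - τ) * g τ := by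
  have hind (τ : ℝ) :
      (Ici 0).indicator k (t - τ) * g τ = (Iic t).indicator (fun τ => k (t - τ) * g τ) τ := by
    simp only [indicator_apply, mem_Ici, mem_Iic, sub_nonneg, ite_zero_mul]
  simp_rw [hind]
  rw [setLIntegral_indicator measurableSet_Iic, inter_comm, Ioc_inter_Iic, inf_of_le_right ht]

theorem lintegral_convolution_le (s : Set ℝ) (hk : Measurable k) (hg : Measurable g) :
    ∫⁻ t in s, ∫⁻ τ in s, k (t - τ) * g τ ≤ (∫⁻ x, k x) * ∫⁻ τ in s, g τ := calc
  _ = ∫⁻ τ in s, (∫⁻ t in s, k (t - τ)) * g τ := by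
      rw [lintegral_lintegral_swap (by fun_prop)]
      exact lintegral_congr fun τ => lintegral_mul_const _ (by fun_prop)
  _ ≤ ∫⁻ τ in s, (∫⁻ x, k x) * g τ := by
      refine lintegral_mono fun τ => ?_
      gcongr ?_ * _
      exact (setLIntegral_le_lintegral _ _).trans_eq (lintegral_sub_right_eq_self k τ)
  _ = _ := lintegral_const_mul _ hg

theorem setLIntegral_Ioc_le_two_mul_of_le_add_convolution {T : ℝ} (hk : Measurable k)
    (hg : Measurable g) (hk_half : ∫⁻ s in Ioi 0, k s ≤ 2⁻¹)
    (hg_fin : ∫⁻ t in Ioc 0 T, g t ≠ ∞)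
    (hle : ∀ t ∈ Ioc 0 T, g t ≤ F t + ∫⁻ τ in Ioc 0 t, k (t - τ) * g τ) :
    ∫⁻ t in Ioc 0 T, g t ≤ 2 * ∫⁻ t in Ioc 0 T, F t := by
  have hk' : Measurable ((Ici 0).indicator k) := hk.indicator measurableSet_Ici
  have hk'_half : ∫⁻ x, (Ici 0).indicator k x ≤ 2⁻¹ := by
    rwa [lintegral_indicator measurableSet_Ici, ← restrict_Ioi_eq_restrict_Ici]
  have hconv : Measurable fun t => ∫⁻ τ in Ioc 0 T, (Ici 0).indicator k (t - τ) * g τ :=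
    Measurable.lintegral_prod_right' (f := fun p => (Ici 0).indicator k (p.1 - p.2) * g p.2)
      (by fun_prop)
  refine ENNReal.le_two_mul_of_le_add_inv_two_mul hg_fin ?_
  calc ∫⁻ t in Ioc 0 T, g t
      ≤ ∫⁻ t in Ioc 0 T, (F t + ∫⁻ τ in Ioc 0 T, (Ici 0).indicator k (t - τ) * g τ) :=
        setLIntegral_mono' measurableSet_Ioc fun t ht =>
          (hle t ht).trans_eq (by rw [setLIntegral_Ioc_sub_mul_eq_indicator ht.2])
    _ = (∫⁻ t in Ioc 0 T, F t) +
          ∫⁻ t in Ioc 0 T, ∫⁻ τ in Ioc 0 T, (Ici 0).indicator k (t - τ) * g τ :=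
        lintegral_add_right' _ hconv.aemeasurable
    _ ≤ (∫⁻ t in Ioc 0 T, F t) + 2⁻¹ * ∫⁻ t in Ioc 0 T, g t := by
        gcongr
        exact (lintegral_convolution_le _ hk' hg).trans (by gcongr)

theorem setLIntegral_Ioi_le_two_mul_of_le_add_convolution (hk : Measurable k)
    (hg : Measurable g) (hk_half : ∫⁻ s in Ioi 0, k s ≤ 2⁻¹)
    (hg_fin : ∀ T, ∫⁻ t in Ioc 0 T, g t ≠ ∞)
    (hle : ∀ t > 0, g t ≤ F t + ∫⁻ τ in Ioc 0 t, k (t - τ) * g τ) :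
    ∫⁻ t in Ioi 0, g t ≤ 2 * ∫⁻ t in Ioi 0, F t := by
  have hunion : ⋃ n : ℕ, Ioc (0 : ℝ) n = Ioi 0 :=
    iUnion_Ioc_eq_Ioi_self_iff.2 fun x _ => exists_nat_ge x
  calc ∫⁻ t in Ioi 0, g t = ⨆ n : ℕ, ∫⁻ t in Ioc 0 (n : ℝ), g t := by
        rw [← hunion, setLIntegral_iUnion_of_directed _
          (Monotone.directed_le fun m n h => Ioc_subset_Ioc_right (Nat.cast_le.2 h))]
    _ ≤ 2 * ∫⁻ t in Ioi 0, F t := iSup_le fun n =>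
        (setLIntegral_Ioc_le_two_mul_of_le_add_convolution hk hg hk_half (hg_fin n)
          fun t ht => hle t ht.1).trans (by gcongr; exact Ioc_subset_Ioi_self)

end VolterraConvolution

theorem lintegral_exp_neg_mul_volterraI_mul_le_inv_two {M : ℝ} (hM : 0 ≤ M) :
    ∫⁻ s in Ioi 0, ENNReal.ofReal (exp (-exp (2 * (M + 1)) * s) * volterraI s) *
      ENNReal.ofReal M ≤ 2⁻¹ := by
  have hν : 1 < exp (2 * (M + 1)) := one_lt_exp_iff.2 (by positivity)
  calc _ = (∫⁻ s in Ioi 0, ENNReal.ofReal (exp (-exp (2 * (M + 1)) * s) * volterraI s)) *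
        ENNReal.ofReal M := lintegral_mul_const _ (by fun_prop)
    _ ≤ ENNReal.ofReal ((log (exp (2 * (M + 1))))⁻¹ * M) := by
        rw [ofReal_mul (inv_pos.2 (log_pos hν)).le]
        gcongr
        exact lintegral_exp_neg_mul_volterraI_le hν
    _ ≤ ENNReal.ofReal 2⁻¹ := ofReal_le_ofReal (by
        rw [log_exp, inv_mul_le_iff₀ (by positivity)]
        linarith)
    _ = 2⁻¹ := by rw [ofReal_inv_of_pos two_pos, ofReal_ofNat]

theorem ContinuousOn.exists_continuous_eqOn_Ici {E : Type*} [TopologicalSpace E] {q : ℝ → E}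
    {a : ℝ} (hq : ContinuousOn q (Ici a)) : ∃ Q : ℝ → E, Continuous Q ∧ EqOn Q q (Ici a) :=
  ⟨fun τ => q (max τ a),
    hq.comp_continuous (continuous_id.max continuous_const) fun τ => le_max_right τ a,
    fun τ hτ => by simp only [max_eq_left (mem_Ici.1 hτ)]⟩

theorem ofReal_exp_mul_norm_le_of_volterra {ζ q f : ℝ → ℂ} {M ν t : ℝ}
    (hM : ∀ τ, 0 ≤ τ → ‖ζ τ‖ ≤ M) (ht : 0 ≤ t)
    (heq : q t + ∫ τ in (0 : ℝ)..t, (volterraI (t - τ) : ℂ) * ζ τ * q τ = f t) :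
    ENNReal.ofReal (exp (-ν * t) * ‖q t‖) ≤ ENNReal.ofReal (exp (-ν * t) * ‖f t‖) +
      ∫⁻ τ in Ioc 0 t, ENNReal.ofReal (exp (-ν * (t - τ)) * volterraI (t - τ)) *
        ENNReal.ofReal M * ENNReal.ofReal (exp (-ν * τ) * ‖q τ‖) := by
  set φ := fun τ => (volterraI (t - τ) : ℂ) * ζ τ * q τ
  have hq : ‖q t‖ ≤ ‖f t‖ + ‖∫ τ in (0 : ℝ)..t, φ τ‖ :=
    eq_sub_of_add_eq heq ▸ norm_sub_le _ _
  have hφ : ‖∫ τ in (0 : ℝ)..t, φ τ‖ₑ ≤ ∫⁻ τ in Ioc 0 t, ‖φ τ‖ₑ := by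
    rw [intervalIntegral.integral_of_le ht]
    exact enorm_integral_le_lintegral_enorm _
  have hφ_le : ∀ τ ∈ Ioc 0 t, ENNReal.ofReal (exp (-ν * t)) * ‖φ τ‖ₑ ≤
      ENNReal.ofReal (exp (-ν * (t - τ)) * volterraI (t - τ)) * ENNReal.ofReal M *
        ENNReal.ofReal (exp (-ν * τ) * ‖q τ‖) := by
    rintro τ ⟨hτ, hτt⟩
    have hI : 0 ≤ volterraI (t - τ) := volterraI_nonneg (sub_nonneg.2 hτt)
    have hM0 : 0 ≤ M := (norm_nonneg _).trans (hM τ hτ.le)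
    rw [← ofReal_norm, ← ofReal_mul (exp_pos _).le, ← ofReal_mul (by positivity),
      ← ofReal_mul (by positivity)]
    refine ofReal_le_ofReal ?_
    calc exp (-ν * t) * ‖φ τ‖
        = exp (-ν * (t - τ)) * volterraI (t - τ) * ‖ζ τ‖ * (exp (-ν * τ) * ‖q τ‖) := by
          simp only [φ, norm_mul, Complex.norm_real, norm_of_nonneg hI]
          rw [show -ν * t = -ν * (t - τ) + -ν * τ by ring, exp_add]
          ring
      _ ≤ _ := by gcongr; exact hM τ hτ.le
  calc ENNReal.ofReal (exp (-ν * t) * ‖q t‖)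
      ≤ ENNReal.ofReal (exp (-ν * t) * ‖f t‖ + exp (-ν * t) * ‖∫ τ in (0 : ℝ)..t, φ τ‖) :=
        ofReal_le_ofReal (by rw [← mul_add]; gcongr)
    _ ≤ ENNReal.ofReal (exp (-ν * t) * ‖f t‖) +
          ENNReal.ofReal (exp (-ν * t)) * ‖∫ τ in (0 : ℝ)..t, φ τ‖ₑ := by
        rw [← ofReal_norm, ← ofReal_mul (exp_pos _).le]
        exact ofReal_add_le
    _ ≤ ENNReal.ofReal (exp (-ν * t) * ‖f t‖) +
          ∫⁻ τ in Ioc 0 t, ENNReal.ofReal (exp (-ν * t)) * ‖φ τ‖ₑ := by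
        rw [lintegral_const_mul' _ _ ofReal_ne_top]
        gcongr
    _ ≤ _ := add_le_add le_rfl (setLIntegral_mono' measurableSet_Ioc hφ_le)

theorem solution_laplace_transformable_general (ζ f : ℝ → ℂ)
    (hζb : ∃ M : ℝ, ∀ t : ℝ, 0 ≤ t → ‖ζ t‖ ≤ M)
    (hfint : ∀ ν : ℝ, 1 < ν →
      (∫⁻ t in Set.Ioi (0 : ℝ),
        ENNReal.ofReal (Real.exp (-ν * t) * ‖f t‖)) < ⊤) :
    ∃ ν : ℝ, 1 < ν ∧
      ∀ q : ℝ → ℂ, ContinuousOn q (Set.Ici 0) →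
        (∀ t : ℝ, 0 ≤ t →
          q t + ∫ τ in (0 : ℝ)..t, (volterraI (t - τ) : ℂ) * ζ τ * q τ = f t) →
        (∫⁻ t in Set.Ioi (0 : ℝ),
          ENNReal.ofReal (Real.exp (-ν * t) * ‖q t‖)) < ⊤ := by
  obtain ⟨M, hM⟩ := hζb
  have hM0 : 0 ≤ M := (norm_nonneg _).trans (hM 0 le_rfl)
  set ν := exp (2 * (M + 1))
  have hν : 1 < ν := one_lt_exp_iff.2 (by positivity)
  refine ⟨ν, hν, fun q hqc heq => ?_⟩
  obtain ⟨Q, hQc, hQq⟩ := hqc.exists_continuous_eqOn_Ici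
  have hQeq (t : ℝ) (ht : 0 ≤ t) :
      Q t + ∫ τ in (0 : ℝ)..t, (volterraI (t - τ) : ℂ) * ζ τ * Q τ = f t := by
    rw [hQq ht, intervalIntegral.integral_congr fun τ hτ => by
      rw [hQq (uIcc_of_le ht ▸ hτ).1]]
    exact heq t ht
  calc ∫⁻ t in Ioi 0, ENNReal.ofReal (exp (-ν * t) * ‖q t‖)
      = ∫⁻ t in Ioi 0, ENNReal.ofReal (exp (-ν * t) * ‖Q t‖) :=
        setLIntegral_congr_fun measurableSet_Ioi fun t ht => by rw [hQq (mem_Ici.2 ht.le)]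
    _ ≤ 2 * ∫⁻ t in Ioi 0, ENNReal.ofReal (exp (-ν * t) * ‖f t‖) :=
        setLIntegral_Ioi_le_two_mul_of_le_add_convolution (by fun_prop) (by fun_prop)
          (lintegral_exp_neg_mul_volterraI_mul_le_inv_two hM0)
          (fun T => (Continuous.integrableOn_Ioc (by fun_prop)).lintegral_lt_top.ne)
          fun t ht => ofReal_exp_mul_norm_le_of_volterra hM ht.le (hQeq t ht.le)
    _ < ∞ := mul_lt_top ofNat_lt_top (hfint ν hν)

/-- If `ζ` is bounded and continuous on `[0,∞)` and `f` is continuous with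
`∫₀^∞ e^{-νt}|f(t)| dt < ∞` for every `ν > 1`, then there is `ν > 1` such that the unique
continuous solution `q` of `q(t) + ∫₀^t 𝓘(t-τ) ζ(τ) q(τ) dτ = f(t)` satisfies
`∫₀^∞ e^{-νt}|q(t)| dt < ∞`. -/
theorem solution_laplace_transformable (ζ f : ℝ → ℂ)
    (hζc : ContinuousOn ζ (Set.Ici 0))
    (hζb : ∃ M : ℝ, ∀ t : ℝ, 0 ≤ t → ‖ζ t‖ ≤ M)
    (hfc : ContinuousOn f (Set.Ici 0))
    (hfint : ∀ ν : ℝ, 1 < ν →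
      (∫⁻ t in Set.Ioi (0 : ℝ),
        ENNReal.ofReal (Real.exp (-ν * t) * ‖f t‖)) < ⊤) :
    ∃ ν : ℝ, 1 < ν ∧
      ∀ q : ℝ → ℂ, ContinuousOn q (Set.Ici 0) →
        (∀ t : ℝ, 0 ≤ t →
          q t + ∫ τ in (0 : ℝ)..t, (volterraI (t - τ) : ℂ) * ζ τ * q τ = f t) →
        (∫⁻ t in Set.Ioi (0 : ℝ),
          ENNReal.ofReal (Real.exp (-ν * t) * ‖q t‖)) < ⊤ :=
  solution_laplace_transformable_general ζ f hζb hfint
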